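/- arXiv:0904.2104 — 3 statements merged into one kernel-verified Lean document; each statement's English description precedes it below -/
import Mathlib

section
/- Let (H, P, (S_1,…,S_d)) be a minimal Popescu dilation of a Popescu system (v_1,…,v_d) on K. For every D ∈ B(K) with Σ_{k=1}^d v_k D v_k* = D (identify D with P D P ∈ B(H)), the operators Λ^n(D) converge in the weak operator topology to an operator X' which commutes with every S_k and S_k* and satisfies P X' P = D. Moreover the map X' ↦ P X' P is an isometric order isomorphism from the set of self-adjoint elements of the commutant {S_k, S_k* : 1 ≤ k ≤ d}' onto the set of self-adjoint elements of B_τ(K) := {x ∈ B(K) : Σ_{k=1}^d v_k x v_k* = x}. -/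
open ContinuousLinearMap Filter
open scoped ComplexInnerProductSpace ComplexOrder

noncomputable section

/-- The operator `S_I = S_{i₁} ⋯ S_{i_m}` associated to a finite multi-index
(the empty multi-index gives the identity). -/
def cword {d : ℕ} {H : Type*} [NormedAddCommGroup H] [InnerProductSpace ℂ H]
    (S : Fin d → H →L[ℂ] H) (I : List (Fin d)) : H →L[ℂ] H :=
  (I.map S).prod

/-- A Cuntz family: `Sᵢ* Sⱼ = δᵢⱼ 1` and `∑ₖ Sₖ Sₖ* = 1`. -/
def IsCuntzFamily {d : ℕ} {H : Type*} [NormedAddCommGroup H] [InnerProductSpace ℂ H]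
    [CompleteSpace H] (S : Fin d → H →L[ℂ] H) : Prop :=
  (∀ i j : Fin d, adjoint (S i) ∘L S j = if i = j then 1 else 0) ∧
    ∑ k : Fin d, S k ∘L adjoint (S k) = 1

/-- A Popescu system: `∑ₖ vₖ vₖ* = 1`. -/
def IsPopescuSystem {d : ℕ} {K : Type*} [NormedAddCommGroup K] [InnerProductSpace ℂ K]
    [CompleteSpace K] (v : Fin d → K →L[ℂ] K) : Prop :=
  ∑ k : Fin d, v k ∘L adjoint (v k) = 1

/-- A minimal Popescu dilation of a Popescu system `v` on `K`: `H` contains `K` as a closed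
subspace via the isometric embedding `ι` (so `P = ι ∘ ι*` is the orthogonal projection of `H`
onto the copy of `K`), `S` is a Cuntz family leaving the copy of `K` invariant under every
`Sₖ*` (`P Sₖ* P = Sₖ* P`), the compression of `Sₖ` to `K` is `vₖ`, and the vectors
`S_I ξ`, `ξ ∈ K`, are total in `H`. -/
def IsMinimalDilation {d : ℕ} {K H : Type*}
    [NormedAddCommGroup K] [InnerProductSpace ℂ K] [CompleteSpace K]
    [NormedAddCommGroup H] [InnerProductSpace ℂ H] [CompleteSpace H]
    (v : Fin d → K →L[ℂ] K) (ι : K →L[ℂ] H) (S : Fin d → H →L[ℂ] H) : Prop :=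
  IsCuntzFamily S ∧
  adjoint ι ∘L ι = 1 ∧
  (∀ k, (ι ∘L adjoint ι) ∘L adjoint (S k) ∘L (ι ∘L adjoint ι) = adjoint (S k) ∘L (ι ∘L adjoint ι)) ∧
  (∀ k, adjoint ι ∘L S k ∘L ι = v k) ∧
  Dense ((Submodule.span ℂ {x : H | ∃ (I : List (Fin d)) (ξ : K), x = cword S I (ι ξ)} :
    Submodule ℂ H) : Set H)


/-- The canonical endomorphism `Λ(X) = ∑ₖ Sₖ X Sₖ*`. -/
def cLam {d : ℕ} {H : Type*} [NormedAddCommGroup H] [InnerProductSpace ℂ H] [CompleteSpace H]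
    (S : Fin d → H →L[ℂ] H) (X : H →L[ℂ] H) : H →L[ℂ] H :=
  ∑ k : Fin d, S k ∘L X ∘L adjoint (S k)

/-!
The differences `Λⁿ⁺¹(P D P) - Λⁿ(P D P)` form a `Λ`-orbit whose compressions to `K` vanish,
because `D` is fixed by `x ↦ ∑ₖ vₖ x vₖ*`. Since `Λ(Y) Sⱼ = Sⱼ Y` and `Sᵢ* Λ(Y) = Y Sᵢ*`, every
step of such an orbit strips one letter from the words in a matrix coefficient
`⟪S_I ξ, Λⁿ(Y) S_J η⟫` (`ξ, η ∈ K`), so these coefficients vanish once `n ≥ |I| + |J|`. Hence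
`⟪f, Λⁿ(P D P) g⟫` is eventually constant on the dense span of the vectors `S_I ξ`, and being
uniformly bounded by `‖D‖` it converges for all `f, g`: this gives the weak limit `X'`, which
commutes with the `Sₖ` and `Sₖ*` by the same two relations. The same peeling argument applied to
a constant orbit shows that an element of the commutant with zero compression is zero, which
gives injectivity of the compression map; isometry and order preservation follow because every
`X` in the commutant is the weak limit of `Λⁿ(P X P)`, whose norms are at most `‖P X P‖` and
which are positive as soon as `P X P` is.
-/

open ContinuousLinearMapWOT (ofCLM ofCLM_injective tendsto_iff_forall_inner_apply_tendsto
  continuous_postcomp continuous_precomp)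
open Topology
open scoped NNReal InnerProductSpace

theorem cauchySeq_of_dense_of_lipschitzWith {X Y : Type*} [PseudoMetricSpace X]
    [PseudoMetricSpace Y] {u : ℕ → X → Y} {C : ℝ≥0} (hu : ∀ n, LipschitzWith C (u n))
    {s : Set X} (hs : Dense s) (h : ∀ x ∈ s, CauchySeq fun n => u n x) (x : X) :
    CauchySeq fun n => u n x := by
  rw [Metric.cauchySeq_iff']
  intro ε hε
  obtain ⟨y, hys, hxy⟩ := hs.exists_dist_lt x (show 0 < ε / (3 * (C + 1)) by positivity)
  obtain ⟨N, hN⟩ := Metric.cauchySeq_iff'.1 (h y hys) (ε / 3) (by positivity)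
  have hclose (n : ℕ) : dist (u n x) (u n y) ≤ ε / 3 := calc
    dist (u n x) (u n y) ≤ C * dist x y := (hu n).dist_le_mul x y
    _ ≤ (C + 1) * (ε / (3 * (C + 1))) := by gcongr; linarith
    _ = ε / 3 := by field_simp
  refine ⟨N, fun n hn => ?_⟩
  calc dist (u n x) (u N x)
      ≤ dist (u n x) (u n y) + dist (u n y) (u N y) + dist (u N y) (u N x) := dist_triangle4 ..
    _ < ε := by linarith [hclose n, hclose N, hN n hn, dist_comm (u N y) (u N x)]

theorem norm_comp_comp_le_of_norm_le_one {𝕜 E F G H : Type*} [NontriviallyNormedField 𝕜]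
    [NormedAddCommGroup E] [NormedSpace 𝕜 E] [NormedAddCommGroup F] [NormedSpace 𝕜 F]
    [NormedAddCommGroup G] [NormedSpace 𝕜 G] [NormedAddCommGroup H] [NormedSpace 𝕜 H]
    {A : G →L[𝕜] H} {B : E →L[𝕜] F} (hA : ‖A‖ ≤ 1) (hB : ‖B‖ ≤ 1) (X : F →L[𝕜] G) :
    ‖A ∘L X ∘L B‖ ≤ ‖X‖ :=
  calc ‖A ∘L X ∘L B‖ ≤ ‖A‖ * (‖X‖ * ‖B‖) :=
        (opNorm_comp_le _ _).trans (by gcongr; exact opNorm_comp_le _ _)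
    _ ≤ 1 * (‖X‖ * 1) := by gcongr
    _ = ‖X‖ := by ring

section WeakOperatorLimits

variable {𝕜 H : Type*} [RCLike 𝕜] [NormedAddCommGroup H] [InnerProductSpace 𝕜 H]

theorem cauchySeq_inner_of_dense {T : ℕ → H →L[𝕜] H} {C : ℝ≥0} (hT : ∀ n, ‖T n‖ ≤ C)
    {s : Set H} (hs : Dense s) (h : ∀ x ∈ s, ∀ y ∈ s, CauchySeq fun n => ⟪x, T n y⟫_𝕜)
    (x y : H) : CauchySeq fun n => ⟪x, T n y⟫_𝕜 := by
  have hbound (n : ℕ) (a b : H) : ‖⟪a, T n b⟫_𝕜‖ ≤ C * (‖a‖ * ‖b‖) := calc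
    ‖⟪a, T n b⟫_𝕜‖ ≤ ‖a‖ * ‖T n b‖ := norm_inner_le_norm _ _
    _ ≤ ‖a‖ * (C * ‖b‖) := by gcongr; exact (T n).le_of_opNorm_le (hT n) b
    _ = C * (‖a‖ * ‖b‖) := by ring
  have hright : ∀ x ∈ s, ∀ y, CauchySeq fun n => ⟪x, T n y⟫_𝕜 := fun x hx =>
    cauchySeq_of_dense_of_lipschitzWith (C := C * ‖x‖₊) (fun n => .of_dist_le_mul fun y y' => by
      simpa [dist_eq_norm, ← inner_sub_right, mul_assoc, mul_comm ‖x‖] using hbound n x (y - y'))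
      hs (h x hx)
  exact cauchySeq_of_dense_of_lipschitzWith (C := C * ‖y‖₊) (fun n => .of_dist_le_mul fun x x' => by
    simpa [dist_eq_norm, ← inner_sub_left, mul_assoc, mul_comm ‖y‖] using hbound n (x - x') y)
    hs (fun x hx => hright x hx y) x

theorem eventually_inner_eq_zero_of_mem_span {α : Type*} {l : Filter α} {T : α → H →L[𝕜] H}
    {s : Set H} (h : ∀ x ∈ s, ∀ y ∈ s, ∀ᶠ a in l, ⟪x, T a y⟫_𝕜 = 0) {x y : H}
    (hx : x ∈ Submodule.span 𝕜 s) (hy : y ∈ Submodule.span 𝕜 s) :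
    ∀ᶠ a in l, ⟪x, T a y⟫_𝕜 = 0 := by
  induction hy using Submodule.span_induction with
  | mem y hy =>
    induction hx using Submodule.span_induction with
    | mem x hx => exact h x hx y hy
    | zero => simp
    | add x x' _ _ hx hx' => filter_upwards [hx, hx'] with a h h'; simp [inner_add_left, h, h']
    | smul c x _ hx => filter_upwards [hx] with a h; simp [inner_smul_left, h]
  | zero => simp
  | add y y' _ _ hy hy' => filter_upwards [hy, hy'] with a h h'; simp [inner_add_right, h, h']
  | smul c y _ hy => filter_upwards [hy] with a h; simp [inner_smul_right, h]

theorem ext_inner_of_dense_span {A B : H →L[𝕜] H} {s : Set H}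
    (hs : Dense (Submodule.span 𝕜 s : Set H)) (h : ∀ x ∈ s, ∀ y ∈ s, ⟪x, A y⟫_𝕜 = ⟪x, B y⟫_𝕜) :
    A = B := by
  refine ContinuousLinearMap.ext_on hs fun y hy => ?_
  have : innerSL 𝕜 (A y - B y) = 0 := ContinuousLinearMap.ext_on hs fun x hx => by
    rw [innerSL_apply_apply, zero_apply, inner_sub_left, ← inner_conj_symm,
      ← inner_conj_symm (B y), h x hx y hy, sub_self]
  rw [← sub_eq_zero, ← inner_self_eq_zero (𝕜 := 𝕜)]
  exact congr($this (A y - B y))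

variable [CompleteSpace H]

theorem exists_tendsto_of_cauchySeq_inner {T : ℕ → H →L[𝕜] H} {C : ℝ} (hT : ∀ n, ‖T n‖ ≤ C)
    (h : ∀ x y, CauchySeq fun n => ⟪x, T n y⟫_𝕜) :
    ∃ X : H →L[𝕜] H, Tendsto (fun n => ofCLM (T n)) atTop (𝓝 (ofCLM X)) ∧ ‖X‖ ≤ C := by
  set L : H → H → 𝕜 := fun x y => limUnder atTop fun n => ⟪x, T n y⟫_𝕜
  have hL (x y : H) : Tendsto (fun n => ⟪x, T n y⟫_𝕜) atTop (𝓝 (L x y)) :=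
    (h x y).tendsto_limUnder
  have hLC (x y : H) : ‖L x y‖ ≤ C * ‖x‖ * ‖y‖ := by
    refine le_of_tendsto (hL x y).norm (Eventually.of_forall fun n => ?_)
    calc ‖⟪x, T n y⟫_𝕜‖ ≤ ‖x‖ * ‖T n y‖ := norm_inner_le_norm _ _
      _ ≤ ‖x‖ * (C * ‖y‖) := by gcongr; exact (T n).le_of_opNorm_le (hT n) y
      _ = C * ‖x‖ * ‖y‖ := by ring
  let B : H →L⋆[𝕜] H →L[𝕜] 𝕜 := LinearMap.mkContinuous₂ (LinearMap.mk₂'ₛₗ (starRingEnd 𝕜)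
    (RingHom.id 𝕜) L
    (fun x x' y => tendsto_nhds_unique (hL _ _) (by
      simpa only [inner_add_left] using (hL x y).add (hL x' y)))
    (fun c x y => tendsto_nhds_unique (hL _ _) (by
      simpa only [inner_smul_left, smul_eq_mul] using (hL x y).const_mul _))
    (fun x y y' => tendsto_nhds_unique (hL _ _) (by
      simpa only [map_add, inner_add_right] using (hL x y).add (hL x y')))
    (fun c x y => tendsto_nhds_unique (hL _ _) (by
      simpa only [map_smul, inner_smul_right, smul_eq_mul, RingHom.id_apply]
        using (hL x y).const_mul c))) C hLC
  set X := adjoint (InnerProductSpace.continuousLinearMapOfBilin B)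
  have hX (x y : H) : ⟪x, X y⟫_𝕜 = L x y := by
    rw [adjoint_inner_right, InnerProductSpace.continuousLinearMapOfBilin_apply]
    rfl
  refine ⟨X, tendsto_iff_forall_inner_apply_tendsto.2 fun y x => ?_, ?_⟩
  · rw [ContinuousLinearMapWOT.ofCLM_apply, hX]
    exact hL x y
  · refine opNorm_le_of_re_inner_le ((norm_nonneg _).trans (hT 0)) fun x y hx hy => ?_
    calc RCLike.re ⟪X x, y⟫_𝕜 ≤ ‖⟪X x, y⟫_𝕜‖ := RCLike.re_le_norm _
      _ = ‖L y x‖ := by rw [← inner_conj_symm, RCLike.norm_conj, hX]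
      _ ≤ C := by simpa [hx, hy] using hLC y x

theorem isPositive_of_tendsto_wot {T : ℕ → H →L[𝕜] H} {X : H →L[𝕜] H}
    (hT : ∀ n, (T n).IsPositive) (hX : Tendsto (fun n => ofCLM (T n)) atTop (𝓝 (ofCLM X))) :
    X.IsPositive := by
  refine isPositive_def'.2 ⟨ofCLM_injective <| tendsto_nhds_unique hX.star ?_, fun x => ?_⟩
  · have hstar (A : H →L[𝕜] H) : star (ofCLM A) = ofCLM (star A) := rfl
    simpa [hstar, (hT _).isSelfAdjoint.star_eq] using hX
  · rw [reApplyInnerSelf_apply, inner_re_symm]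
    exact ge_of_tendsto ((RCLike.continuous_re.tendsto _).comp
      (tendsto_iff_forall_inner_apply_tendsto.1 hX x x))
      (Eventually.of_forall fun n => (hT n).re_inner_nonneg_right x)

theorem compression_eq_of_tendsto_wot {K : Type*} [NormedAddCommGroup K]
    [InnerProductSpace 𝕜 K] [CompleteSpace K] {J : K →L[𝕜] H} {T : ℕ → H →L[𝕜] H}
    {X : H →L[𝕜] H} {D : K →L[𝕜] K} (hX : Tendsto (fun n => ofCLM (T n)) atTop (𝓝 (ofCLM X)))
    (hT : ∀ n, adjoint J ∘L T n ∘L J = D) : adjoint J ∘L X ∘L J = D := by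
  apply ofCLM_injective
  have hconst (n : ℕ) : (ofCLM (adjoint J)).comp ((ofCLM (T n)).comp (ofCLM J)) = ofCLM D := by
    rw [← hT n]; rfl
  refine tendsto_nhds_unique (((continuous_postcomp (ofCLM (adjoint J))).comp
    (continuous_precomp (ofCLM J))).tendsto _ |>.comp hX) ?_
  simp [Function.comp_def, hconst]

end WeakOperatorLimits

section Words

variable {d : ℕ} {H : Type*} [NormedAddCommGroup H] [InnerProductSpace ℂ H]
  (S : Fin d → H →L[ℂ] H)

theorem cword_nil_apply (x : H) : cword S [] x = x := rfl

theorem cword_cons_apply (i : Fin d) (I : List (Fin d)) (x : H) :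
    cword S (i :: I) x = S i (cword S I x) := by
  simp [cword]

def wordVectors {K : Type*} [NormedAddCommGroup K] [InnerProductSpace ℂ K] (ι : K →L[ℂ] H) :
    Set H :=
  {x | ∃ (I : List (Fin d)) (ξ : K), x = cword S I (ι ξ)}

end Words

section Cuntz

variable {d : ℕ} {H : Type*} [NormedAddCommGroup H] [InnerProductSpace ℂ H] [CompleteSpace H]
  {S : Fin d → H →L[ℂ] H}

theorem cLam_eq_sum_mul (Y : H →L[ℂ] H) : cLam S Y = ∑ k, S k * Y * adjoint (S k) := by
  simp only [cLam, mul_def, comp_assoc]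

theorem cLam_sub (Y Y' : H →L[ℂ] H) : cLam S (Y - Y') = cLam S Y - cLam S Y' := by
  simp [cLam, comp_sub, sub_comp, Finset.sum_sub_distrib]

theorem isPositive_cLam {Y : H →L[ℂ] H} (hY : Y.IsPositive) :
    (cLam S Y).IsPositive :=
  isPositive_sum _ fun k _ => hY.conj_adjoint (S k)

theorem isPositive_iterate_cLam {Y : H →L[ℂ] H} (hY : Y.IsPositive) (n : ℕ) :
    ((cLam S)^[n] Y).IsPositive :=
  Function.Iterate.rec (fun Z : H →L[ℂ] H => Z.IsPositive) hY (fun _ => isPositive_cLam) n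

theorem IsCuntzFamily.adjoint_mul_self (hS : IsCuntzFamily S) (i j : Fin d) :
    adjoint (S i) * S j = if i = j then 1 else 0 :=
  hS.1 i j

theorem IsCuntzFamily.adjoint_apply_apply (hS : IsCuntzFamily S) (i j : Fin d) (x : H) :
    adjoint (S i) (S j x) = if i = j then x else 0 := by
  have := congr($(hS.adjoint_mul_self i j) x)
  split_ifs at this ⊢ <;> simpa using this

theorem IsCuntzFamily.cLam_mul (hS : IsCuntzFamily S) (Y : H →L[ℂ] H) (k : Fin d) :
    cLam S Y * S k = S k * Y := by
  simp [cLam_eq_sum_mul, Finset.sum_mul, mul_assoc, hS.adjoint_mul_self]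

theorem IsCuntzFamily.adjoint_mul_cLam (hS : IsCuntzFamily S) (Y : H →L[ℂ] H) (k : Fin d) :
    adjoint (S k) * cLam S Y = Y * adjoint (S k) := by
  simp [cLam_eq_sum_mul, Finset.mul_sum, ← mul_assoc, hS.adjoint_mul_self]

theorem IsCuntzFamily.cLam_apply (hS : IsCuntzFamily S) (Y : H →L[ℂ] H) (k : Fin d) (x : H) :
    cLam S Y (S k x) = S k (Y x) :=
  congr($(hS.cLam_mul Y k) x)

theorem IsCuntzFamily.adjoint_apply_cLam_apply (hS : IsCuntzFamily S) (Y : H →L[ℂ] H)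
    (k : Fin d) (x : H) : adjoint (S k) (cLam S Y x) = Y (adjoint (S k) x) :=
  congr($(hS.adjoint_mul_cLam Y k) x)

theorem IsCuntzFamily.cLam_eq_self (hS : IsCuntzFamily S) {X : H →L[ℂ] H}
    (hX : ∀ k, Commute X (S k)) : cLam S X = X :=
  calc cLam S X = X * ∑ k, S k * adjoint (S k) := by
        simp only [cLam_eq_sum_mul, Finset.mul_sum, ← mul_assoc, (hX _).eq]
    _ = X := by rw [← mul_one X]; exact congrArg (X * ·) hS.2

theorem IsCuntzFamily.sum_norm_adjoint_apply_sq (hS : IsCuntzFamily S) (x : H) :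
    ∑ k, ‖adjoint (S k) x‖ ^ 2 = ‖x‖ ^ 2 := by
  have := congr(⟪x, $(hS.2) x⟫_ℂ)
  rw [one_apply_eq_self, sum_apply, inner_sum] at this
  simp only [comp_apply, ← adjoint_inner_left, inner_self_eq_norm_sq_to_K] at this
  exact_mod_cast this

theorem IsCuntzFamily.norm_cLam_le (hS : IsCuntzFamily S) (Y : H →L[ℂ] H) :
    ‖cLam S Y‖ ≤ ‖Y‖ := by
  refine opNorm_le_of_re_inner_le (norm_nonneg Y) fun x y hx hy => ?_
  calc RCLike.re ⟪cLam S Y x, y⟫_ℂ = ∑ k, RCLike.re ⟪Y (adjoint (S k) x), adjoint (S k) y⟫_ℂ := by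
        simp [cLam, sum_apply, adjoint_inner_right]
    _ ≤ ∑ k, ‖Y‖ * (‖adjoint (S k) x‖ * ‖adjoint (S k) y‖) := by
        gcongr with k
        refine (RCLike.re_le_norm _).trans ((norm_inner_le_norm _ _).trans ?_)
        rw [← mul_assoc]
        gcongr
        exact Y.le_opNorm _
    _ ≤ ‖Y‖ * (√(∑ k, ‖adjoint (S k) x‖ ^ 2) * √(∑ k, ‖adjoint (S k) y‖ ^ 2)) := by
        rw [← Finset.mul_sum]
        gcongr
        exact Real.sum_mul_le_sqrt_mul_sqrt _ _ _
    _ = ‖Y‖ := by simp [hS.sum_norm_adjoint_apply_sq, hx, hy]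

def IsInCommutant (S : Fin d → H →L[ℂ] H) (X : H →L[ℂ] H) : Prop :=
  ∀ k, Commute X (S k) ∧ Commute X (adjoint (S k))

theorem IsInCommutant.sub {X Y : H →L[ℂ] H} (hX : IsInCommutant S X) (hY : IsInCommutant S Y) :
    IsInCommutant S (X - Y) :=
  fun k => ⟨(hX k).1.sub_left (hY k).1, (hX k).2.sub_left (hY k).2⟩

theorem IsInCommutant.adjoint {X : H →L[ℂ] H} (hX : IsInCommutant S X) :
    IsInCommutant S (adjoint X) :=
  fun k => ⟨by simpa [star_eq_adjoint] using (hX k).2.star_star, (hX k).1.star_star⟩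

theorem IsCuntzFamily.isInCommutant_of_tendsto_wot (hS : IsCuntzFamily S)
    {T : ℕ → H →L[ℂ] H} {X : H →L[ℂ] H} (hT : ∀ n, T (n + 1) = cLam S (T n))
    (hX : Tendsto (fun n => ofCLM (T n)) atTop (𝓝 (ofCLM X))) : IsInCommutant S X := by
  have hX' := hX.comp (tendsto_add_atTop_nat 1)
  refine fun k => ⟨ofCLM_injective (tendsto_nhds_unique (hX'.mul_const (ofCLM (S k))) ?_),
    ofCLM_injective (tendsto_nhds_unique (hX.mul_const (ofCLM (adjoint (S k)))) ?_)⟩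
  · have h (n : ℕ) : ofCLM (T (n + 1)) * ofCLM (S k) = ofCLM (S k) * ofCLM (T n) := by
      rw [hT]; exact congrArg ofCLM (hS.cLam_mul _ k)
    exact (hX.const_mul (ofCLM (S k))).congr fun n => (h n).symm
  · have h (n : ℕ) : ofCLM (T n) * ofCLM (adjoint (S k)) =
        ofCLM (adjoint (S k)) * ofCLM (T (n + 1)) := by
      rw [hT]; exact congrArg ofCLM (hS.adjoint_mul_cLam _ k).symm
    exact (hX'.const_mul (ofCLM (adjoint (S k)))).congr fun n => (h n).symm

end Cuntz

namespace IsMinimalDilation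

variable {d : ℕ} {K H : Type*} [NormedAddCommGroup K] [InnerProductSpace ℂ K] [CompleteSpace K]
  [NormedAddCommGroup H] [InnerProductSpace ℂ H] [CompleteSpace H]
  {v : Fin d → K →L[ℂ] K} {ι : K →L[ℂ] H} {S : Fin d → H →L[ℂ] H}

theorem isCuntzFamily (hdil : IsMinimalDilation v ι S) : IsCuntzFamily S :=
  hdil.1

theorem dense_span_wordVectors (hdil : IsMinimalDilation v ι S) :
    Dense (Submodule.span ℂ (wordVectors S ι) : Set H) :=
  hdil.2.2.2.2

theorem adjoint_ι_apply_ι (hdil : IsMinimalDilation v ι S) (x : K) : adjoint ι (ι x) = x :=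
  congr($(hdil.2.1) x)

theorem norm_ι_le_one (hdil : IsMinimalDilation v ι S) : ‖ι‖ ≤ 1 :=
  opNorm_le_bound _ zero_le_one fun x => by
    rw [(norm_map_iff_adjoint_comp_self ι).2 hdil.2.1 x, one_mul]

theorem norm_adjoint_ι_le_one (hdil : IsMinimalDilation v ι S) : ‖adjoint ι‖ ≤ 1 := by
  rw [LinearIsometryEquiv.norm_map]
  exact hdil.norm_ι_le_one

theorem adjoint_comp_ι (hdil : IsMinimalDilation v ι S) (k : Fin d) :
    adjoint (S k) ∘L ι = ι ∘L adjoint (v k) := by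
  have hv : adjoint ι ∘L adjoint (S k) ∘L ι = adjoint (v k) := by
    rw [← hdil.2.2.2.1 k]
    simp only [adjoint_comp, adjoint_adjoint, comp_assoc]
  ext x
  have hPx := congr($(hdil.2.2.1 k) (ι x))
  simp only [comp_apply, hdil.adjoint_ι_apply_ι] at hPx
  rw [comp_apply, ← hPx, comp_apply, ← hv]
  rfl

theorem adjoint_apply_ι (hdil : IsMinimalDilation v ι S) (k : Fin d) (x : K) :
    adjoint (S k) (ι x) = ι (adjoint (v k) x) :=
  congr($(hdil.adjoint_comp_ι k) x)

theorem adjoint_ι_comp (hdil : IsMinimalDilation v ι S) (k : Fin d) :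
    adjoint ι ∘L S k = v k ∘L adjoint ι := by
  simpa only [adjoint_comp, adjoint_adjoint] using congr(adjoint $(hdil.adjoint_comp_ι k))

theorem compression_cLam (hdil : IsMinimalDilation v ι S) (Y : H →L[ℂ] H) :
    adjoint ι ∘L cLam S Y ∘L ι = cLam v (adjoint ι ∘L Y ∘L ι) := by
  ext x
  simp only [cLam, comp_apply, sum_apply, map_sum]
  refine Finset.sum_congr rfl fun k _ => ?_
  rw [hdil.adjoint_apply_ι, ← comp_apply (adjoint ι) (S k), hdil.adjoint_ι_comp]
  rfl

theorem cLam_compression_of_isInCommutant (hdil : IsMinimalDilation v ι S) {X : H →L[ℂ] H}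
    (hX : IsInCommutant S X) : cLam v (adjoint ι ∘L X ∘L ι) = adjoint ι ∘L X ∘L ι := by
  rw [← hdil.compression_cLam, hdil.isCuntzFamily.cLam_eq_self fun k => (hX k).1]

theorem eventually_inner_cword_eq_zero (hdil : IsMinimalDilation v ι S) {T : ℕ → H →L[ℂ] H}
    (hT : ∀ n, T (n + 1) = cLam S (T n)) (hcompr : ∀ n, adjoint ι ∘L T n ∘L ι = 0)
    (I J : List (Fin d)) (ξ η : K) :
    ∀ᶠ n in atTop, ⟪cword S I (ι ξ), T n (cword S J (ι η))⟫_ℂ = 0 := by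
  have shift {p : ℕ → Prop} (h : ∀ᶠ n in atTop, p (n + 1)) : ∀ᶠ n in atTop, p n := by
    rw [← map_add_atTop_eq_nat 1]; exact h
  have hS := hdil.isCuntzFamily
  induction J generalizing I ξ with
  | nil =>
    induction I generalizing η with
    | nil =>
      refine Eventually.of_forall fun n => ?_
      rw [cword_nil_apply, cword_nil_apply, ← adjoint_inner_right]
      simpa using congr(⟪ξ, $(hcompr n) η⟫_ℂ)
    | cons i I ih =>
      refine shift ((ih (adjoint (v i) η)).mono fun n h => ?_)
      rwa [cword_cons_apply, ← adjoint_inner_right, hT, hS.adjoint_apply_cLam_apply,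
        cword_nil_apply, hdil.adjoint_apply_ι]
  | cons j J ih =>
    refine shift ?_
    have hstep (x : H) (n : ℕ) : ⟪x, T (n + 1) (cword S (j :: J) (ι η))⟫_ℂ =
        ⟪adjoint (S j) x, T n (cword S J (ι η))⟫_ℂ := by
      rw [cword_cons_apply, hT, hS.cLam_apply, adjoint_inner_left]
    simp only [hstep]
    cases I with
    | nil =>
      simpa only [cword_nil_apply, hdil.adjoint_apply_ι] using ih [] (adjoint (v j) ξ)
    | cons i I =>
      rw [cword_cons_apply]
      simp only [hS.adjoint_apply_apply]
      split_ifs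
      · exact ih I ξ
      · simp

theorem eq_of_compression_eq (hdil : IsMinimalDilation v ι S) {X Y : H →L[ℂ] H}
    (hX : IsInCommutant S X) (hY : IsInCommutant S Y)
    (h : adjoint ι ∘L X ∘L ι = adjoint ι ∘L Y ∘L ι) : X = Y := by
  have hfix : cLam S (X - Y) = X - Y :=
    hdil.isCuntzFamily.cLam_eq_self fun k => ((hX.sub hY) k).1
  refine ext_inner_of_dense_span hdil.dense_span_wordVectors ?_
  rintro _ ⟨I, ξ, rfl⟩ _ ⟨J, η, rfl⟩
  have := hdil.eventually_inner_cword_eq_zero (T := fun _ => X - Y) (fun _ => hfix.symm)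
    (fun _ => by rw [sub_comp, comp_sub, h, sub_self]) I J ξ η
  simpa [inner_sub_right, sub_eq_zero] using this.exists

theorem compression_iterate_cLam (hdil : IsMinimalDilation v ι S) {D : K →L[ℂ] K}
    (hD : cLam v D = D) (n : ℕ) :
    adjoint ι ∘L (cLam S)^[n] (ι ∘L D ∘L adjoint ι) ∘L ι = D := by
  induction n with
  | zero => ext x; simp [hdil.adjoint_ι_apply_ι]
  | succ n ih => rw [Function.iterate_succ_apply', hdil.compression_cLam, ih, hD]

theorem norm_iterate_cLam_le (hdil : IsMinimalDilation v ι S) (D : K →L[ℂ] K) (n : ℕ) :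
    ‖(cLam S)^[n] (ι ∘L D ∘L adjoint ι)‖ ≤ ‖D‖ :=
  Function.Iterate.rec (fun Y => ‖Y‖ ≤ ‖D‖)
    (norm_comp_comp_le_of_norm_le_one hdil.norm_ι_le_one hdil.norm_adjoint_ι_le_one D)
    (fun Y h => (hdil.isCuntzFamily.norm_cLam_le Y).trans h) n

theorem exists_tendsto_iterate_cLam (hdil : IsMinimalDilation v ι S) {D : K →L[ℂ] K}
    (hD : cLam v D = D) : ∃ X : H →L[ℂ] H,
      Tendsto (fun n => ofCLM ((cLam S)^[n] (ι ∘L D ∘L adjoint ι))) atTop (𝓝 (ofCLM X)) ∧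
      ‖X‖ ≤ ‖D‖ := by
  set T : ℕ → H →L[ℂ] H := fun n => (cLam S)^[n] (ι ∘L D ∘L adjoint ι)
  have hnorm : ∀ n, ‖T n‖ ≤ ‖D‖ := hdil.norm_iterate_cLam_le D
  have hstep : ∀ x ∈ wordVectors S ι, ∀ y ∈ wordVectors S ι,
      ∀ᶠ n in atTop, ⟪x, (T (n + 1) - T n) y⟫_ℂ = 0 := by
    rintro _ ⟨I, ξ, rfl⟩ _ ⟨J, η, rfl⟩
    refine hdil.eventually_inner_cword_eq_zero (fun n => ?_) (fun n => ?_) I J ξ η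
    · simp only [T, Function.iterate_succ_apply', cLam_sub]
    · rw [sub_comp, comp_sub, hdil.compression_iterate_cLam hD, hdil.compression_iterate_cLam hD,
        sub_self]
  have hcauchy : ∀ x ∈ Submodule.span ℂ (wordVectors S ι), ∀ y ∈ Submodule.span ℂ (wordVectors S ι),
      CauchySeq fun n => ⟪x, T n y⟫_ℂ := fun x hx y hy => by
    obtain ⟨N, hN⟩ := eventually_atTop.1 (eventually_inner_eq_zero_of_mem_span hstep hx hy)
    obtain ⟨c, hc⟩ := (eventuallyConst_atTop_nat (f := fun n => ⟪x, T n y⟫_ℂ)).2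
      ⟨N, fun n hn => by simpa [inner_sub_right, sub_eq_zero] using hN n hn⟩ |>.exists_tendsto
    exact (hc.mono_right (pure_le_nhds c)).cauchySeq
  exact exists_tendsto_of_cauchySeq_inner hnorm
    (cauchySeq_inner_of_dense (C := ‖D‖₊) hnorm hdil.dense_span_wordVectors hcauchy)

theorem exists_commutant_lift (hdil : IsMinimalDilation v ι S) {D : K →L[ℂ] K}
    (hD : cLam v D = D) : ∃ X : H →L[ℂ] H,
      Tendsto (fun n => ofCLM ((cLam S)^[n] (ι ∘L D ∘L adjoint ι))) atTop (𝓝 (ofCLM X)) ∧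
      IsInCommutant S X ∧ adjoint ι ∘L X ∘L ι = D ∧ ‖X‖ ≤ ‖D‖ := by
  obtain ⟨X, hX, hnorm⟩ := hdil.exists_tendsto_iterate_cLam hD
  exact ⟨X, hX, hdil.isCuntzFamily.isInCommutant_of_tendsto_wot
    (fun n => Function.iterate_succ_apply' ..) hX,
    compression_eq_of_tendsto_wot hX (hdil.compression_iterate_cLam hD), hnorm⟩

theorem tendsto_iterate_cLam_compression (hdil : IsMinimalDilation v ι S) {X : H →L[ℂ] H}
    (hX : IsInCommutant S X) :
    Tendsto (fun n => ofCLM ((cLam S)^[n] (ι ∘L (adjoint ι ∘L X ∘L ι) ∘L adjoint ι))) atTop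
      (𝓝 (ofCLM X)) ∧ ‖X‖ ≤ ‖adjoint ι ∘L X ∘L ι‖ := by
  obtain ⟨Y, hlim, hY, hYX, hnorm⟩ :=
    hdil.exists_commutant_lift (hdil.cLam_compression_of_isInCommutant hX)
  obtain rfl := hdil.eq_of_compression_eq hY hX hYX
  exact ⟨hlim, hnorm⟩

end IsMinimalDilation

theorem commutant_lifting_general {d : ℕ}
    {K H : Type*} [NormedAddCommGroup K] [InnerProductSpace ℂ K] [CompleteSpace K]
    [NormedAddCommGroup H] [InnerProductSpace ℂ H] [CompleteSpace H]
    (v : Fin d → K →L[ℂ] K)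
    (ι : K →L[ℂ] H) (S : Fin d → H →L[ℂ] H) (hdil : IsMinimalDilation v ι S) :
    (∀ D : K →L[ℂ] K, (∑ k : Fin d, v k ∘L D ∘L adjoint (v k)) = D →
      ∃ X' : H →L[ℂ] H,
        (∀ f g : H,
          Filter.Tendsto (fun n : ℕ => ⟪f, ((cLam S)^[n] (ι ∘L D ∘L adjoint ι)) g⟫)
            Filter.atTop (nhds ⟪f, X' g⟫)) ∧
        (∀ k : Fin d, Commute X' (S k) ∧ Commute X' (adjoint (S k))) ∧
        adjoint ι ∘L X' ∘L ι = D) ∧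
    -- the compression map on self-adjoint elements of the commutant lands in `B_τ(K)`
    -- and is isometric
    (∀ X' : H →L[ℂ] H, (∀ k : Fin d, Commute X' (S k) ∧ Commute X' (adjoint (S k))) →
      IsSelfAdjoint X' →
        (∑ k : Fin d, v k ∘L (adjoint ι ∘L X' ∘L ι) ∘L adjoint (v k)) = adjoint ι ∘L X' ∘L ι ∧
        ‖adjoint ι ∘L X' ∘L ι‖ = ‖X'‖) ∧
    -- it is bijective onto the self-adjoint part of `B_τ(K)`
    (∀ D : K →L[ℂ] K, IsSelfAdjoint D → (∑ k : Fin d, v k ∘L D ∘L adjoint (v k)) = D →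
      ∃! X' : H →L[ℂ] H,
        (∀ k : Fin d, Commute X' (S k) ∧ Commute X' (adjoint (S k))) ∧ IsSelfAdjoint X' ∧
          adjoint ι ∘L X' ∘L ι = D) ∧
    -- and it is an order isomorphism
    (∀ X₁ X₂ : H →L[ℂ] H,
      (∀ k : Fin d, Commute X₁ (S k) ∧ Commute X₁ (adjoint (S k))) →
      (∀ k : Fin d, Commute X₂ (S k) ∧ Commute X₂ (adjoint (S k))) →
      IsSelfAdjoint X₁ → IsSelfAdjoint X₂ →
        ((X₂ - X₁).IsPositive ↔ (adjoint ι ∘L (X₂ - X₁) ∘L ι).IsPositive)) := by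
  refine ⟨fun D hD => ?_, fun X hX _ => ?_, fun D hDsa hD => ?_, fun X₁ X₂ h₁ h₂ _ _ => ?_⟩
  · obtain ⟨X, hlim, hX, hXD, -⟩ := hdil.exists_commutant_lift hD
    exact ⟨X, fun f g => tendsto_iff_forall_inner_apply_tendsto.1 hlim g f, hX, hXD⟩
  · exact ⟨hdil.cLam_compression_of_isInCommutant hX, le_antisymm
      (norm_comp_comp_le_of_norm_le_one hdil.norm_adjoint_ι_le_one hdil.norm_ι_le_one X)
      (hdil.tendsto_iterate_cLam_compression hX).2⟩
  · obtain ⟨X, -, hX, hXD, -⟩ := hdil.exists_commutant_lift hD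
    have hXsa : adjoint X = X := hdil.eq_of_compression_eq hX.adjoint hX (by
      rw [hXD, ← hDsa.adjoint_eq, ← hXD]
      simp only [adjoint_comp, adjoint_adjoint, comp_assoc])
    exact ⟨X, ⟨hX, hXsa, hXD⟩, fun Y ⟨hY, _, hYD⟩ =>
      hdil.eq_of_compression_eq hY hX (hYD.trans hXD.symm)⟩
  · have hX := IsInCommutant.sub h₂ h₁
    exact ⟨fun hpos => hpos.adjoint_conj ι, fun hpos => isPositive_of_tendsto_wot
      (isPositive_iterate_cLam (hpos.conj_adjoint ι)) (hdil.tendsto_iterate_cLam_compression hX).1⟩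

/-- In a minimal Popescu dilation `(H, P, S)` of `(K, v)` (`P = ι ∘ ι*`):
for every `D ∈ B(K)` fixed by `x ↦ ∑ₖ vₖ x vₖ*` (identified with `P D P = ι D ι* ∈ B(H)`),
the operators `Λⁿ(D)` converge in the weak operator topology to an operator `X'` commuting
with every `Sₖ` and `Sₖ*` and compressing to `D`; moreover `X' ↦ P X' P` is an isometric
order isomorphism from the self-adjoint part of the commutant `{Sₖ, Sₖ*}'` onto the
self-adjoint part of `B_τ(K) = {x : ∑ₖ vₖ x vₖ* = x}`. -/
theorem commutant_lifting {d : ℕ} (hd : 2 ≤ d)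
    {K H : Type*} [NormedAddCommGroup K] [InnerProductSpace ℂ K] [CompleteSpace K]
    [NormedAddCommGroup H] [InnerProductSpace ℂ H] [CompleteSpace H]
    (v : Fin d → K →L[ℂ] K) (hv : IsPopescuSystem v)
    (ι : K →L[ℂ] H) (S : Fin d → H →L[ℂ] H) (hdil : IsMinimalDilation v ι S) :
    (∀ D : K →L[ℂ] K, (∑ k : Fin d, v k ∘L D ∘L adjoint (v k)) = D →
      ∃ X' : H →L[ℂ] H,
        (∀ f g : H,
          Filter.Tendsto (fun n : ℕ => ⟪f, ((cLam S)^[n] (ι ∘L D ∘L adjoint ι)) g⟫)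
            Filter.atTop (nhds ⟪f, X' g⟫)) ∧
        (∀ k : Fin d, Commute X' (S k) ∧ Commute X' (adjoint (S k))) ∧
        adjoint ι ∘L X' ∘L ι = D) ∧
    -- the compression map on self-adjoint elements of the commutant lands in `B_τ(K)`
    -- and is isometric
    (∀ X' : H →L[ℂ] H, (∀ k : Fin d, Commute X' (S k) ∧ Commute X' (adjoint (S k))) →
      IsSelfAdjoint X' →
        (∑ k : Fin d, v k ∘L (adjoint ι ∘L X' ∘L ι) ∘L adjoint (v k)) = adjoint ι ∘L X' ∘L ι ∧
        ‖adjoint ι ∘L X' ∘L ι‖ = ‖X'‖) ∧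
    -- it is bijective onto the self-adjoint part of `B_τ(K)`
    (∀ D : K →L[ℂ] K, IsSelfAdjoint D → (∑ k : Fin d, v k ∘L D ∘L adjoint (v k)) = D →
      ∃! X' : H →L[ℂ] H,
        (∀ k : Fin d, Commute X' (S k) ∧ Commute X' (adjoint (S k))) ∧ IsSelfAdjoint X' ∧
          adjoint ι ∘L X' ∘L ι = D) ∧
    -- and it is an order isomorphism
    (∀ X₁ X₂ : H →L[ℂ] H,
      (∀ k : Fin d, Commute X₁ (S k) ∧ Commute X₁ (adjoint (S k))) →
      (∀ k : Fin d, Commute X₂ (S k) ∧ Commute X₂ (adjoint (S k))) →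
      IsSelfAdjoint X₁ → IsSelfAdjoint X₂ →
        ((X₂ - X₁).IsPositive ↔ (adjoint ι ∘L (X₂ - X₁) ∘L ι).IsPositive)) :=
  commutant_lifting_general v ι S hdil
end
end

section
/- Let (S_1,…,S_d) be a Cuntz family on a complex Hilbert space H and Ω a unit vector such that the linear span of {S_I S_J* Ω : I, J finite multi-indices} is dense in H. Let K be the closure of the linear span of {S_I* Ω : I a finite multi-index}, P the orthogonal projection onto K, and v_k = P S_k P (as operators on K). Then: (a) the vectors {v_I* Ω : I a finite multi-index} are total in K; (b) Σ_{k=1}^d v_k v_k* equals the identity of K; (c) S_k* P = P S_k* P for all k; (d) ⟨Ω, S_I S_J* Ω⟩ = ⟨Ω, v_I v_J* Ω⟩ for all finite multi-indices I, J, and the vectors {S_I ξ : ξ ∈ K, I a finite multi-index} are total in H. -/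
open ContinuousLinearMap Filter
open scoped ComplexInnerProductSpace ComplexOrder

noncomputable section

/-!
Each `S_k^*` sends a generator `S_I^* Ω` of `K` to the generator `S_{I k}^* Ω`, so `K` is
invariant under every `S_k^*`; this is (c), `S_k^* P = P S_k^* P`. Consequently `v_k^* = S_k^* P`
and by induction `v_I^* P = S_I^* P`; evaluated at `Ω ∈ K` this identifies `v_I^* Ω` with
`S_I^* Ω`, giving (a) and (d), while `∑ v_k v_k^* = P (∑ S_k S_k^*) P = P` is (b). Totality of
`{S_I ξ : ξ ∈ K}` holds because it already contains every `S_I S_J^* Ω`.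
-/

lemma Submodule.mapsTo_topologicalClosure_span {R M : Type*} [Semiring R] [AddCommMonoid M]
    [Module R M] [TopologicalSpace M] [ContinuousAdd M] [ContinuousConstSMul R M]
    (T : M →L[R] M) {s : Set M} (hT : ∀ x ∈ s, T x ∈ Submodule.span R s) :
    Set.MapsTo T (Submodule.span R s).topologicalClosure (Submodule.span R s).topologicalClosure :=
  have hle : Submodule.span R s ≤
      (Submodule.span R s).topologicalClosure.comap (T : M →ₗ[R] M) :=
    Submodule.span_le.2 fun x hx => Submodule.le_topologicalClosure _ (hT x hx)
  fun _ hx => Submodule.topologicalClosure_minimal _ hle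
    ((Submodule.isClosed_topologicalClosure _).preimage T.continuous) hx

lemma ContinuousLinearMap.comp_eq_comp_comp_of_mapsTo {R M : Type*} [Semiring R]
    [AddCommMonoid M] [Module R M] [TopologicalSpace M] {K : Submodule R M} {P : M →L[R] M}
    (hPK : ∀ x, P x ∈ K) (hPid : ∀ x ∈ K, P x = x) {T : M →L[R] M}
    (hT : Set.MapsTo T K K) :
    T ∘L P = P ∘L T ∘L P := by
  ext x
  exact (hPid _ (hT (hPK x))).symm

section Compression

variable {𝕜 E : Type*} [RCLike 𝕜] [NormedAddCommGroup E] [InnerProductSpace 𝕜 E]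
  [CompleteSpace E] {P : E →L[𝕜] E}

lemma adjoint_comp_comp_of_adjoint_comp_eq (hP : IsSelfAdjoint P) {A : E →L[𝕜] E}
    (hA : adjoint A ∘L P = P ∘L adjoint A ∘L P) :
    adjoint (P ∘L A ∘L P) = adjoint A ∘L P := by
  rw [adjoint_comp, adjoint_comp, hP.adjoint_eq, comp_assoc, ← hA]

lemma sum_compression_comp_adjoint {ι : Type*} [Fintype ι] (hP : IsSelfAdjoint P)
    (hPP : P ∘L P = P) {S : ι → E →L[𝕜] E}
    (hS : ∀ k, adjoint (S k) ∘L P = P ∘L adjoint (S k) ∘L P)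
    (hsum : ∑ k, S k ∘L adjoint (S k) = 1) :
    ∑ k, (P ∘L S k ∘L P) ∘L adjoint (P ∘L S k ∘L P) = P := by
  have hterm : ∀ k, (P ∘L S k ∘L P) ∘L adjoint (P ∘L S k ∘L P)
      = P ∘L (S k ∘L adjoint (S k)) ∘L P := by
    intro k
    rw [adjoint_comp_comp_of_adjoint_comp_eq hP (hS k), comp_assoc, comp_assoc, ← comp_assoc P,
      ← hS k]
    simp only [comp_assoc]
  rw [Finset.sum_congr rfl fun k _ => hterm k, ← comp_finsetSum, ← finsetSum_comp, hsum,
    one_def, id_comp, hPP]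

end Compression

section Words

variable {d : ℕ} {H : Type*} [NormedAddCommGroup H] [InnerProductSpace ℂ H]
  (S : Fin d → H →L[ℂ] H)

@[simp]
lemma cword_nil : cword S [] = 1 := rfl

@[simp]
lemma cword_cons (i : Fin d) (I : List (Fin d)) : cword S (i :: I) = S i ∘L cword S I := by
  simp [cword, ContinuousLinearMap.mul_def]

lemma cword_append (I J : List (Fin d)) : cword S (I ++ J) = cword S I ∘L cword S J := by
  simp [cword, ContinuousLinearMap.mul_def]

variable [CompleteSpace H]

lemma adjoint_cword_cons (i : Fin d) (I : List (Fin d)) :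
    adjoint (cword S (i :: I)) = adjoint (cword S I) ∘L adjoint (S i) := by
  rw [cword_cons, adjoint_comp]

lemma adjoint_cword_append_singleton (I : List (Fin d)) (k : Fin d) :
    adjoint (cword S (I ++ [k])) = adjoint (S k) ∘L adjoint (cword S I) := by
  simp [cword_append, adjoint_comp, ContinuousLinearMap.one_def]

lemma mapsTo_adjoint_closure_span_adjoint_cword (Ω : H) (k : Fin d) :
    Set.MapsTo (adjoint (S k))
      (Submodule.span ℂ
        {x : H | ∃ I : List (Fin d), x = adjoint (cword S I) Ω}).topologicalClosure
      (Submodule.span ℂ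
        {x : H | ∃ I : List (Fin d), x = adjoint (cword S I) Ω}).topologicalClosure :=
  Submodule.mapsTo_topologicalClosure_span _ fun _ ⟨I, hx⟩ =>
    Submodule.subset_span ⟨I ++ [k], by rw [hx, adjoint_cword_append_singleton, comp_apply]⟩

variable {S} in
lemma adjoint_cword_compression_comp {P : H →L[ℂ] H} (hP : IsSelfAdjoint P) (hPP : P ∘L P = P)
    (hS : ∀ k, adjoint (S k) ∘L P = P ∘L adjoint (S k) ∘L P) (I : List (Fin d)) :
    adjoint (cword (fun k => P ∘L S k ∘L P) I) ∘L P = adjoint (cword S I) ∘L P := by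
  induction I with
  | nil => rfl
  | cons i I ih =>
    calc adjoint (cword (fun k => P ∘L S k ∘L P) (i :: I)) ∘L P
        = adjoint (cword (fun k => P ∘L S k ∘L P) I) ∘L P ∘L adjoint (S i) ∘L P := by
          rw [adjoint_cword_cons, adjoint_comp_comp_of_adjoint_comp_eq hP (hS i), comp_assoc,
            comp_assoc, hPP, ← hS i]
      _ = adjoint (cword S (i :: I)) ∘L P := by
          rw [← comp_assoc, ih, comp_assoc, ← hS i, adjoint_cword_cons, comp_assoc]

end Words

theorem compression_popescu_system_of_cuntz_general {d : ℕ}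
    {H : Type*} [NormedAddCommGroup H] [InnerProductSpace ℂ H] [CompleteSpace H]
    (S : Fin d → H →L[ℂ] H) (hS : IsCuntzFamily S)
    (Ω : H)
    (hcyc : Dense ((Submodule.span ℂ
        {x : H | ∃ I J : List (Fin d), x = cword S I (adjoint (cword S J) Ω)} :
        Submodule ℂ H) : Set H))
    (Ksub : Submodule ℂ H)
    (hKsub : Ksub = (Submodule.span ℂ
        {x : H | ∃ I : List (Fin d), x = adjoint (cword S I) Ω}).topologicalClosure)
    -- `P` is the orthogonal projection of `H` onto `K`
    (P : H →L[ℂ] H) (hP1 : IsSelfAdjoint P) (hP2 : ∀ x : H, P x ∈ Ksub)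
    (hP3 : ∀ x ∈ Ksub, P x = x)
    (v : Fin d → H →L[ℂ] H) (hv : ∀ k, v k = P ∘L S k ∘L P) :
    -- (a) the vectors `v_I* Ω` are total in `K`
    ((Submodule.span ℂ
        {x : H | ∃ I : List (Fin d), x = adjoint (cword v I) Ω}).topologicalClosure = Ksub) ∧
    -- (b) `∑ₖ vₖ vₖ*` is the identity of `K`
    (∑ k : Fin d, v k ∘L adjoint (v k)) = P ∧
    -- (c)
    (∀ k, adjoint (S k) ∘L P = P ∘L adjoint (S k) ∘L P) ∧
    -- (d) matching correlation functions and totality of `{S_I ξ : ξ ∈ K}` in `H`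
    (∀ I J : List (Fin d),
      ⟪Ω, cword S I (adjoint (cword S J) Ω)⟫ = ⟪Ω, cword v I (adjoint (cword v J) Ω)⟫) ∧
    Dense ((Submodule.span ℂ
        {x : H | ∃ (I : List (Fin d)) (ξ : H), ξ ∈ Ksub ∧ x = cword S I ξ} :
        Submodule ℂ H) : Set H) := by
  obtain rfl : v = fun k => P ∘L S k ∘L P := funext hv
  have hgen : ∀ I : List (Fin d), adjoint (cword S I) Ω ∈ Ksub := fun I =>
    hKsub ▸ Submodule.le_topologicalClosure _ (Submodule.subset_span ⟨I, rfl⟩)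
  have hPP : P ∘L P = P := by
    ext x
    exact hP3 _ (hP2 x)
  have hc : ∀ k, adjoint (S k) ∘L P = P ∘L adjoint (S k) ∘L P := fun k =>
    comp_eq_comp_comp_of_mapsTo hP2 hP3 (hKsub ▸ mapsTo_adjoint_closure_span_adjoint_cword S Ω k)
  have hvS : ∀ I, adjoint (cword (fun k => P ∘L S k ∘L P) I) Ω = adjoint (cword S I) Ω := by
    intro I
    have hPΩ : P Ω = Ω := hP3 _ (by simpa [adjoint_one] using hgen [])
    simpa [hPΩ] using congr($(adjoint_cword_compression_comp hP1 hPP hc I) Ω)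
  refine ⟨by simp only [hvS, hKsub], sum_compression_comp_adjoint hP1 hPP hc hS.2, hc, ?_, ?_⟩
  · intro I J
    rw [← adjoint_inner_left, ← adjoint_inner_left (cword _ I), hvS, hvS]
  · refine hcyc.mono (Submodule.span_mono ?_)
    rintro x ⟨I, J, rfl⟩
    exact ⟨I, _, hgen J, rfl⟩

/-- Let `S` be a Cuntz family on `H` with a cyclic unit vector `Ω`, let
`K` be the closed span of `{S_I* Ω}` with orthogonal projection `P`, and `vₖ = P Sₖ P`
(the compressions, viewed as operators supported on `K`). Then `{v_I* Ω}` is total in `K`,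
`∑ₖ vₖ vₖ*` is the identity of `K` (namely `P`), `Sₖ* P = P Sₖ* P`, the correlation
functions of `S` and `v` at `Ω` agree, and `{S_I ξ : ξ ∈ K}` is total in `H`. -/
theorem compression_popescu_system_of_cuntz {d : ℕ} (hd : 2 ≤ d)
    {H : Type*} [NormedAddCommGroup H] [InnerProductSpace ℂ H] [CompleteSpace H]
    (S : Fin d → H →L[ℂ] H) (hS : IsCuntzFamily S)
    (Ω : H) (hΩ : ‖Ω‖ = 1)
    (hcyc : Dense ((Submodule.span ℂ
        {x : H | ∃ I J : List (Fin d), x = cword S I (adjoint (cword S J) Ω)} :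
        Submodule ℂ H) : Set H))
    (Ksub : Submodule ℂ H)
    (hKsub : Ksub = (Submodule.span ℂ
        {x : H | ∃ I : List (Fin d), x = adjoint (cword S I) Ω}).topologicalClosure)
    -- `P` is the orthogonal projection of `H` onto `K`
    (P : H →L[ℂ] H) (hP1 : IsSelfAdjoint P) (hP2 : ∀ x : H, P x ∈ Ksub)
    (hP3 : ∀ x ∈ Ksub, P x = x)
    (v : Fin d → H →L[ℂ] H) (hv : ∀ k, v k = P ∘L S k ∘L P) :
    -- (a) the vectors `v_I* Ω` are total in `K`
    ((Submodule.span ℂ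
        {x : H | ∃ I : List (Fin d), x = adjoint (cword v I) Ω}).topologicalClosure = Ksub) ∧
    -- (b) `∑ₖ vₖ vₖ*` is the identity of `K`
    (∑ k : Fin d, v k ∘L adjoint (v k)) = P ∧
    -- (c)
    (∀ k, adjoint (S k) ∘L P = P ∘L adjoint (S k) ∘L P) ∧
    -- (d) matching correlation functions and totality of `{S_I ξ : ξ ∈ K}` in `H`
    (∀ I J : List (Fin d),
      ⟪Ω, cword S I (adjoint (cword S J) Ω)⟫ = ⟪Ω, cword v I (adjoint (cword v J) Ω)⟫) ∧
    Dense ((Submodule.span ℂ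
        {x : H | ∃ (I : List (Fin d)) (ξ : H), ξ ∈ Ksub ∧ x = cword S I ξ} :
        Submodule ℂ H) : Set H) :=
  compression_popescu_system_of_cuntz_general S hS Ω hcyc Ksub hKsub P hP1 hP2 hP3 v hv
end
end

section
/- Let (S_1,…,S_d) and (Ŝ_1,…,Ŝ_d) be two Cuntz families on the same complex Hilbert space H such that every S_i and S_i* commutes with every Ŝ_j and Ŝ_j*, and let Ω be a unit vector with S_i* Ω = Ŝ_i* Ω for every 1 ≤ i ≤ d. Then for all 1 ≤ i, j ≤ d and all finite multi-indices I, J, I', J': ⟨Ω, Ŝ_{I'} Ŝ_{J'}* S_i S_I S_J* S_j* Ω⟩ = ⟨Ω, Ŝ_i Ŝ_{I'} Ŝ_{J'}* Ŝ_j* S_I S_J* Ω⟩. -/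
open ContinuousLinearMap Filter
open scoped ComplexInnerProductSpace ComplexOrder

noncomputable section

/-!
Replace `Sⱼ* Ω` by `Tⱼ* Ω`, commute `Tⱼ*` past `S_I S_J*` and `Sᵢ` past `T_{I'} T_{J'}*` to the
front; then `⟪Ω, Sᵢ x⟫ = ⟪Sᵢ* Ω, x⟫ = ⟪Tᵢ* Ω, x⟫ = ⟪Ω, Tᵢ x⟫`.
-/

section

variable {d : ℕ} {H : Type*} [NormedAddCommGroup H] [InnerProductSpace ℂ H]

theorem commute_cword {X : H →L[ℂ] H} {T : Fin d → H →L[ℂ] H} (h : ∀ k, Commute X (T k))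
    (L : List (Fin d)) : Commute X (cword T L) :=
  Commute.list_prod_right _ _ (by simpa using fun k _ => h k)

variable [CompleteSpace H]

theorem commute_adjoint_cword {X : H →L[ℂ] H} {T : Fin d → H →L[ℂ] H}
    (h : ∀ k, Commute (adjoint X) (T k)) (L : List (Fin d)) :
    Commute X (adjoint (cword T L)) := by
  simpa [star_eq_adjoint] using (commute_cword h L).star_star

theorem inner_apply_eq_of_adjoint_apply_eq {s t : H →L[ℂ] H} {Ω : H}
    (h : adjoint s Ω = adjoint t Ω) (v : H) : ⟪Ω, s v⟫ = ⟪Ω, t v⟫ := by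
  rw [← adjoint_inner_left, h, adjoint_inner_left]

theorem inner_vacuum_exchange {s t s' t' A B : H →L[ℂ] H} {Ω : H}
    (hA : Commute s A) (hB : Commute B (adjoint t'))
    (hs : adjoint s Ω = adjoint t Ω) (hs' : adjoint s' Ω = adjoint t' Ω) :
    ⟪Ω, (A ∘L s ∘L B ∘L adjoint s') Ω⟫ = ⟪Ω, (t ∘L A ∘L adjoint t' ∘L B) Ω⟫ := by
  have hmove : A ∘L s ∘L B ∘L adjoint t' = s ∘L A ∘L adjoint t' ∘L B := by
    change A * (s * (B * adjoint t')) = s * (A * (adjoint t' * B))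
    rw [hB.eq, ← mul_assoc, ← hA.eq, mul_assoc]
  calc ⟪Ω, (A ∘L s ∘L B ∘L adjoint s') Ω⟫
      = ⟪Ω, (s ∘L A ∘L adjoint t' ∘L B) Ω⟫ := by
        rw [← hmove]; simp only [comp_apply, hs']
    _ = ⟪Ω, (t ∘L A ∘L adjoint t' ∘L B) Ω⟫ := inner_apply_eq_of_adjoint_apply_eq hs _

end

theorem commuting_cuntz_exchange_identity_general {d : ℕ}
    {H : Type*} [NormedAddCommGroup H] [InnerProductSpace ℂ H] [CompleteSpace H]
    (S T : Fin d → H →L[ℂ] H)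
    (hcomm : ∀ i j : Fin d,
      Commute (S i) (T j) ∧ Commute (S i) (adjoint (T j)) ∧
      Commute (adjoint (S i)) (T j) ∧ Commute (adjoint (S i)) (adjoint (T j)))
    (Ω : H)
    (hvac : ∀ i : Fin d, adjoint (S i) Ω = adjoint (T i) Ω) :
    ∀ (i j : Fin d) (I J I' J' : List (Fin d)),
      ⟪Ω, (cword T I' ∘L adjoint (cword T J') ∘L S i ∘L cword S I ∘L adjoint (cword S J)
            ∘L adjoint (S j)) Ω⟫
        = ⟪Ω, (T i ∘L cword T I' ∘L adjoint (cword T J') ∘L adjoint (T j) ∘L cword S I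
            ∘L adjoint (cword S J)) Ω⟫ := by
  intro i j I J I' J'
  have hA : Commute (S i) (cword T I' ∘L adjoint (cword T J')) :=
    (commute_cword (fun k => (hcomm i k).1) I').mul_right
      (commute_adjoint_cword (fun k => (hcomm i k).2.2.1) J')
  have hB : Commute (cword S I ∘L adjoint (cword S J)) (adjoint (T j)) :=
    ((commute_cword (fun k => ((hcomm k j).2.1).symm) I).mul_right
      (commute_adjoint_cword (fun k => by simpa using ((hcomm k j).1).symm) J)).symm
  simpa only [comp_assoc] using inner_vacuum_exchange hA hB (hvac i) (hvac j)

/-- For two commuting Cuntz families `S`, `T` on `H` and a unit vector `Ω`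
with `Sᵢ* Ω = Tᵢ* Ω` for all `i`, the mixed correlation functions satisfy
`⟨Ω, T_{I'} T_{J'}* Sᵢ S_I S_J* Sⱼ* Ω⟩ = ⟨Ω, Tᵢ T_{I'} T_{J'}* Tⱼ* S_I S_J* Ω⟩`. -/
theorem commuting_cuntz_exchange_identity {d : ℕ} (hd : 2 ≤ d)
    {H : Type*} [NormedAddCommGroup H] [InnerProductSpace ℂ H] [CompleteSpace H]
    (S T : Fin d → H →L[ℂ] H) (hS : IsCuntzFamily S) (hT : IsCuntzFamily T)
    (hcomm : ∀ i j : Fin d,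
      Commute (S i) (T j) ∧ Commute (S i) (adjoint (T j)) ∧
      Commute (adjoint (S i)) (T j) ∧ Commute (adjoint (S i)) (adjoint (T j)))
    (Ω : H) (hΩ : ‖Ω‖ = 1)
    (hvac : ∀ i : Fin d, adjoint (S i) Ω = adjoint (T i) Ω) :
    ∀ (i j : Fin d) (I J I' J' : List (Fin d)),
      ⟪Ω, (cword T I' ∘L adjoint (cword T J') ∘L S i ∘L cword S I ∘L adjoint (cword S J)
            ∘L adjoint (S j)) Ω⟫
        = ⟪Ω, (T i ∘L cword T I' ∘L adjoint (cword T J') ∘L adjoint (T j) ∘L cword S I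
            ∘L adjoint (cword S J)) Ω⟫ :=
  commuting_cuntz_exchange_identity_general S T hcomm Ω hvac
end
end
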